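/- Let C, Ĉ ∈ ℝ^{n×n} be SPSD with C − Ĉ SPSD, and suppose additionally that C and Ĉ commute and that C^{1/2} Ĉ^{1/2} = Ĉ, where M^{1/2} denotes the unique SPSD square root of an SPSD matrix M. Then W₂(N(0,C), N(0,Ĉ)) = trace(C − Ĉ)^{1/2}. -/

import Mathlib

open MeasureTheory Matrix
open scoped ENNReal Classical

/-- The standard Gaussian measure on `ι → ℝ`. -/
noncomputable def stdGaussian (ι : Type*) [Fintype ι] : Measure (ι → ℝ) :=
  Measure.pi fun _ => ProbabilityTheory.gaussianReal 0 1

/-- The unique SPSD square root of an SPSD matrix (junk value `0` otherwise). -/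
noncomputable def psdSqrt {ι : Type*} [Fintype ι] [DecidableEq ι] (M : Matrix ι ι ℝ) :
    Matrix ι ι ℝ :=
  if h : M.PosSemidef then
    (h.1.eigenvectorUnitary : Matrix ι ι ℝ) *
      diagonal ((↑) ∘ NNReal.sqrt ∘ Real.toNNReal ∘ h.1.eigenvalues) *
      (star h.1.eigenvectorUnitary : Matrix ι ι ℝ)
  else 0

/-- The centered Gaussian measure `N(0, C)` on `ι → ℝ` with covariance matrix `C`. -/
noncomputable def gaussianOf {ι : Type*} [Fintype ι] [DecidableEq ι] (C : Matrix ι ι ℝ) :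
    Measure (ι → ℝ) :=
  (stdGaussian ι).map (fun x => psdSqrt C *ᵥ x)

/-- `H` is a coupling of `ν` and `νhat`: its two marginals are `ν` and `νhat`. -/
def IsCoupling {E F : Type*} [MeasurableSpace E] [MeasurableSpace F]
    (H : Measure (E × F)) (ν : Measure E) (νhat : Measure F) : Prop :=
  H.map Prod.fst = ν ∧ H.map Prod.snd = νhat

/-- The squared Wasserstein-2 distance (w.r.t. the Euclidean norm) between two measures
on `ι → ℝ`: the infimum over all couplings of the integral of the squared Euclidean
distance. -/
noncomputable def wass2sq {ι : Type*} [Fintype ι] (ν νhat : Measure (ι → ℝ)) : ℝ≥0∞ :=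
  ⨅ (H : Measure ((ι → ℝ) × (ι → ℝ))) (_ : IsCoupling H ν νhat),
    ∫⁻ p, ENNReal.ofReal (∑ i, (p.1 i - p.2 i) ^ 2) ∂H

/-!
Write `S = C^{1/2}` and `T = Ĉ^{1/2}`. The hypothesis `S T = Ĉ = T²` says `(S - T)ᵀ T = 0`:
the columns of `T` are orthogonal to those of `S - T`, and `tr ((S - T)(S - T)ᵀ) = tr C - tr Ĉ`.
With `z` standard Gaussian, the coupling `(S z, T z)` of `N(0,C)` and `N(0,Ĉ)` costs
`E ‖(S - T) z‖² = tr (C - Ĉ)`. Conversely `N(0,Ĉ)` lives on `range T`, so every coupling costs at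
least `E dist (S z, range T)²`, and by the orthogonality `T z` is the point of `range T` closest
to `S z = (S - T) z + T z`, which gives the same value.
-/

open scoped RealInnerProductSpace

section psdSqrt

variable {ι : Type*} [Fintype ι] [DecidableEq ι]

lemma transpose_psdSqrt (M : Matrix ι ι ℝ) : (psdSqrt M)ᵀ = psdSqrt M := by
  unfold psdSqrt
  split_ifs
  · simp [← conjTranspose_eq_transpose_of_trivial, Matrix.mul_assoc, star_eq_conjTranspose]
  · exact transpose_zero

lemma psdSqrt_mul_self {M : Matrix ι ι ℝ} (hM : M.PosSemidef) : psdSqrt M * psdSqrt M = M := by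
  set U : Matrix ι ι ℝ := (hM.1.eigenvectorUnitary : Matrix ι ι ℝ)
  have hdiag : diagonal ((↑) ∘ NNReal.sqrt ∘ Real.toNNReal ∘ hM.1.eigenvalues) *
      diagonal ((↑) ∘ NNReal.sqrt ∘ Real.toNNReal ∘ hM.1.eigenvalues)
        = diagonal (RCLike.ofReal ∘ hM.1.eigenvalues : ι → ℝ) := by
    rw [diagonal_mul_diagonal]
    congr 1
    funext i
    simpa using hM.eigenvalues_nonneg i
  have hU : star U * U = 1 := Unitary.coe_star_mul_self _
  conv_rhs => rw [hM.1.spectral_theorem, Unitary.conjStarAlgAut_apply]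
  rw [psdSqrt, dif_pos hM, ← hdiag]
  simp only [Matrix.mul_assoc]
  rw [← Matrix.mul_assoc (star U) U, hU, Matrix.one_mul]

end psdSqrt

section SymmetricPair

variable {ι R : Type*} [Fintype ι] [CommRing R] {S T : Matrix ι ι R}

lemma transpose_sub_mul_eq_zero (hS : Sᵀ = S) (hT : Tᵀ = T) (h : S * T = T * T) :
    (S - T)ᵀ * T = 0 := by
  rw [transpose_sub, hS, hT, Matrix.sub_mul, h, sub_self]

lemma trace_sub_mul_transpose_sub (hS : Sᵀ = S) (hT : Tᵀ = T) (h : S * T = T * T) :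
    ((S - T) * (S - T)ᵀ).trace = (S * S).trace - (T * T).trace := by
  rw [transpose_sub, hS, hT, Matrix.sub_mul, Matrix.mul_sub, Matrix.mul_sub, trace_sub, trace_sub,
    trace_sub, trace_mul_comm T S, h]
  ring

end SymmetricPair

section Gaussian

variable {E : Type*} [NormedAddCommGroup E] [InnerProductSpace ℝ E] [FiniteDimensional ℝ E]
  [MeasurableSpace E] [BorelSpace E]

open ProbabilityTheory in
lemma integral_inner_sq_stdGaussian (a : E) :
    ∫ x, ⟪a, x⟫ ^ 2 ∂(stdGaussian E) = ‖a‖ ^ 2 := by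
  have h := covarianceBilin_apply (IsGaussian.memLp_two_id (μ := stdGaussian E)) a a
  rw [covarianceBilin_stdGaussian, innerSL_apply_apply ℝ, real_inner_self_eq_norm_sq] at h
  simp only [id_eq, integral_id_stdGaussian, sub_zero, ← sq] at h
  exact h.symm

open ProbabilityTheory in
lemma integrable_inner_sq_stdGaussian (a : E) :
    Integrable (fun x => ⟪a, x⟫ ^ 2) (stdGaussian E) :=
  (IsGaussian.memLp_dual (stdGaussian E) (innerSL ℝ a) 2 (by simp)).integrable_sq

end Gaussian

lemma lintegral_sum_sq_mulVec_stdGaussian {m ι : Type*} [Fintype m] [Fintype ι]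
    (A : Matrix m ι ℝ) :
    ∫⁻ z, ENNReal.ofReal (∑ i, (A *ᵥ z) i ^ 2) ∂stdGaussian ι
      = ENNReal.ofReal (A * Aᵀ).trace := by
  have hrow (i : m) (z : ι → ℝ) : (A *ᵥ z) i = ⟪WithLp.toLp 2 (A i), WithLp.toLp 2 z⟫ := by
    simp [mulVec, EuclideanSpace.inner_eq_star_dotProduct, dotProduct_comm]
  have hint (i : m) :=
    integrable_inner_sq_stdGaussian (E := EuclideanSpace ℝ ι) (WithLp.toLp 2 (A i))
  simp_rw [hrow]
  calc ∫⁻ z, ENNReal.ofReal (∑ i, ⟪WithLp.toLp 2 (A i), WithLp.toLp 2 z⟫ ^ 2) ∂stdGaussian ι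
      = ∫⁻ x, ENNReal.ofReal (∑ i, ⟪WithLp.toLp 2 (A i), x⟫ ^ 2)
          ∂ProbabilityTheory.stdGaussian (EuclideanSpace ℝ ι) := by
        rw [← ProbabilityTheory.map_pi_eq_stdGaussian, lintegral_map (by fun_prop) (by fun_prop)]
        rfl
    _ = ENNReal.ofReal (∑ i, ‖WithLp.toLp 2 (A i)‖ ^ 2) := by
        rw [← ofReal_integral_eq_lintegral_ofReal (integrable_finsetSum _ fun i _ => hint i)
          (ae_of_all _ fun x => Finset.sum_nonneg fun i _ => sq_nonneg _),
          integral_finsetSum _ fun i _ => hint i]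
        simp only [integral_inner_sq_stdGaussian]
    _ = ENNReal.ofReal (A * Aᵀ).trace := by
        simp_rw [EuclideanSpace.real_norm_sq_eq]
        simp [trace, mul_apply, sq]

lemma Submodule.infDist_eq_norm_sub_of_inner_eq_zero {F : Type*} [NormedAddCommGroup F]
    [InnerProductSpace ℝ F] (K : Submodule ℝ F) {u v : F} (hv : v ∈ K)
    (h : ∀ w ∈ K, ⟪u - v, w⟫ = 0) : Metric.infDist u K = ‖u - v‖ := by
  rw [(K.norm_eq_iInf_iff_real_inner_eq_zero hv).2 h, Metric.infDist_eq_iInf]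
  simp only [dist_eq_norm]

section Coupling

variable {ι : Type*} [Fintype ι]

lemma sum_sq_sub_eq_dist_toLp_sq (x y : ι → ℝ) :
    ∑ i, (x i - y i) ^ 2 = dist (WithLp.toLp 2 x) (WithLp.toLp 2 y) ^ 2 := by
  simp [EuclideanSpace.dist_sq_eq, Real.dist_eq, sq_abs]

lemma measurable_infDist_toLp (V : Set (EuclideanSpace ℝ ι)) :
    Measurable fun x : ι → ℝ => Metric.infDist (WithLp.toLp 2 x) V :=
  ((Metric.continuous_infDist_pt V).comp (PiLp.continuous_toLp 2 _)).measurable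

lemma wass2sq_map_le {Ω : Type*} [MeasurableSpace Ω] (μ : Measure Ω) {f g : Ω → ι → ℝ}
    (hf : Measurable f) (hg : Measurable g) :
    wass2sq (μ.map f) (μ.map g) ≤ ∫⁻ ω, ENNReal.ofReal (∑ i, (f ω i - g ω i) ^ 2) ∂μ := by
  have hfg : Measurable fun ω => (f ω, g ω) := hf.prodMk hg
  have hcoupling : IsCoupling (μ.map fun ω => (f ω, g ω)) (μ.map f) (μ.map g) :=
    ⟨by rw [Measure.map_map measurable_fst hfg]; rfl,
      by rw [Measure.map_map measurable_snd hfg]; rfl⟩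
  calc wass2sq (μ.map f) (μ.map g)
      ≤ ∫⁻ p, ENNReal.ofReal (∑ i, (p.1 i - p.2 i) ^ 2) ∂μ.map fun ω => (f ω, g ω) :=
        iInf₂_le (μ.map fun ω => (f ω, g ω)) hcoupling
    _ = _ := lintegral_map (by fun_prop) hfg

lemma lintegral_infDist_sq_le_wass2sq {ν νhat : Measure (ι → ℝ)}
    {V : Set (EuclideanSpace ℝ ι)} (hV : ∀ᵐ y ∂νhat, WithLp.toLp 2 y ∈ V) :
    ∫⁻ x, ENNReal.ofReal (Metric.infDist (WithLp.toLp 2 x) V ^ 2) ∂ν ≤ wass2sq ν νhat := by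
  refine le_iInf₂ fun H ⟨hfst, hsnd⟩ => ?_
  have hsnd_mem : ∀ᵐ p ∂H, WithLp.toLp 2 p.2 ∈ V :=
    ae_of_ae_map measurable_snd.aemeasurable (hsnd ▸ hV)
  rw [← hfst, lintegral_map ((measurable_infDist_toLp V).pow_const 2).ennreal_ofReal
    measurable_fst]
  refine lintegral_mono_ae (hsnd_mem.mono fun p hp => ENNReal.ofReal_le_ofReal ?_)
  rw [sum_sq_sub_eq_dist_toLp_sq]
  exact pow_le_pow_left₀ Metric.infDist_nonneg (Metric.infDist_le_dist_of_mem hp) 2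

end Coupling

section GaussianCoupling

variable {m ι : Type*} [Fintype m] [Fintype ι]

lemma wass2sq_map_mulVec_stdGaussian_le (A B : Matrix m ι ℝ) :
    wass2sq ((stdGaussian ι).map (A *ᵥ ·)) ((stdGaussian ι).map (B *ᵥ ·))
      ≤ ENNReal.ofReal ((A - B) * (A - B)ᵀ).trace := by
  refine (wass2sq_map_le _ (by fun_prop) (by fun_prop)).trans_eq ?_
  rw [← lintegral_sum_sq_mulVec_stdGaussian (A - B)]
  simp only [sub_mulVec, Pi.sub_apply]

variable [DecidableEq ι]

lemma ae_toLp_mem_range_map_mulVec (μ : Measure (ι → ℝ)) (A : Matrix m ι ℝ) :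
    ∀ᵐ y ∂μ.map (A *ᵥ ·), WithLp.toLp 2 y ∈ LinearMap.range (toEuclideanLin A) := by
  have hmeas : MeasurableSet {y : m → ℝ | WithLp.toLp 2 y ∈ LinearMap.range (toEuclideanLin A)} :=
    ((Submodule.closed_of_finiteDimensional _).preimage (PiLp.continuous_toLp 2 _)).measurableSet
  refine (ae_map_iff (by fun_prop) hmeas).2 (ae_of_all _ fun z => ⟨WithLp.toLp 2 z, ?_⟩)
  simp

lemma infDist_toLp_range_toEuclideanLin {A B : Matrix m ι ℝ} (h : Aᵀ * B = 0) (z : ι → ℝ) :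
    Metric.infDist (WithLp.toLp 2 ((A + B) *ᵥ z)) (LinearMap.range (toEuclideanLin B))
      = ‖WithLp.toLp 2 (A *ᵥ z)‖ := by
  rw [Submodule.infDist_eq_norm_sub_of_inner_eq_zero _
    (LinearMap.mem_range_self _ (WithLp.toLp 2 z))]
  · simp [add_mulVec]
  have h' : Bᵀ * A = 0 := by simpa using congrArg transpose h
  rintro _ ⟨w, rfl⟩
  simp [add_mulVec, EuclideanSpace.inner_eq_star_dotProduct, dotProduct_mulVec, vecMul_mulVec, h']

lemma le_wass2sq_map_mulVec_stdGaussian {A B : Matrix m ι ℝ} (h : (A - B)ᵀ * B = 0) :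
    ENNReal.ofReal ((A - B) * (A - B)ᵀ).trace
      ≤ wass2sq ((stdGaussian ι).map (A *ᵥ ·)) ((stdGaussian ι).map (B *ᵥ ·)) := by
  set V := LinearMap.range (toEuclideanLin B)
  calc ENNReal.ofReal ((A - B) * (A - B)ᵀ).trace
      = ∫⁻ z, ENNReal.ofReal (Metric.infDist (WithLp.toLp 2 (A *ᵥ z)) V ^ 2) ∂stdGaussian ι := by
        rw [← lintegral_sum_sq_mulVec_stdGaussian]
        refine lintegral_congr fun z => ?_
        rw [← sub_add_cancel A B, infDist_toLp_range_toEuclideanLin h, sub_add_cancel,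
          EuclideanSpace.real_norm_sq_eq]
    _ = ∫⁻ x, ENNReal.ofReal (Metric.infDist (WithLp.toLp 2 x) V ^ 2)
          ∂(stdGaussian ι).map (A *ᵥ ·) := by
        rw [lintegral_map ((measurable_infDist_toLp V).pow_const 2).ennreal_ofReal
          (by fun_prop : Measurable (A *ᵥ ·))]
    _ ≤ _ := lintegral_infDist_sq_le_wass2sq (ae_toLp_mem_range_map_mulVec _ B)

end GaussianCoupling

theorem stmt4_general {n : ℕ} (C Chat : Matrix (Fin n) (Fin n) ℝ)
    (hC : C.PosSemidef) (hChat : Chat.PosSemidef)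
    (hsqrt : psdSqrt C * psdSqrt Chat = Chat) :
    wass2sq (gaussianOf C) (gaussianOf Chat) = ENNReal.ofReal (C - Chat).trace := by
  have hsqrt' : psdSqrt C * psdSqrt Chat = psdSqrt Chat * psdSqrt Chat := by
    rw [hsqrt, psdSqrt_mul_self hChat]
  have htrace : ((psdSqrt C - psdSqrt Chat) * (psdSqrt C - psdSqrt Chat)ᵀ).trace
      = (C - Chat).trace := by
    rw [trace_sub_mul_transpose_sub (transpose_psdSqrt C) (transpose_psdSqrt Chat) hsqrt',
      psdSqrt_mul_self hC, psdSqrt_mul_self hChat, trace_sub]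
  rw [← htrace]
  exact le_antisymm (wass2sq_map_mulVec_stdGaussian_le _ _)
    (le_wass2sq_map_mulVec_stdGaussian
      (transpose_sub_mul_eq_zero (transpose_psdSqrt C) (transpose_psdSqrt Chat) hsqrt'))

/-- if `C`, `Ĉ` and `C - Ĉ` are SPSD, `C` and `Ĉ` commute and
`C^{1/2} Ĉ^{1/2} = Ĉ`, then `W₂(N(0,C), N(0,Ĉ))² = trace (C - Ĉ)`. -/
theorem stmt4 {n : ℕ} (C Chat : Matrix (Fin n) (Fin n) ℝ)
    (hC : C.PosSemidef) (hChat : Chat.PosSemidef) (hdiff : (C - Chat).PosSemidef)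
    (hcomm : C * Chat = Chat * C) (hsqrt : psdSqrt C * psdSqrt Chat = Chat) :
    wass2sq (gaussianOf C) (gaussianOf Chat) = ENNReal.ofReal (C - Chat).trace :=
  stmt4_general C Chat hC hChat hsqrt
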